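/- Let G be a chordal graph on n vertices with no isolated vertices. Then NC(G) is (n − γ(G) − 1)-collapsible, where γ(G) is the domination number of G. -/

import Mathlib

/-!
Replace `NC(G)` by the noncover complex of a family `E` on a vertex set `A`, where `E` is the
edge set of `G[A]` together with some singletons and possibly `∅`, and induct on `|A|`.
If `E` has a least member the complex is a simplex; this covers `|A| ≤ γ + 1`, where any two
members of `E` are comparable. A vertex lying in no member of `E` is a cone point. Otherwise
choose `v` with `{v} ∈ E`, or (when `E` is exactly the edge set of `G[A]`) a neighbour `v` of a
simplicial vertex `z`, which exists by Dirac's lemma and satisfies `N[z] ⊆ N[v]`. The link of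
`v` is the noncover complex of `(A - v, {e ∈ E | v ∉ e})`, with domination number at least
`γ`, and the deletion that of `(A - v, {e - v | e ∈ E})`, with domination number at least
`γ - 1`. Collapsing the link with `v` added to every face collapses the complex onto the
deletion, which raises the dimension bound by one.
-/

variable {V : Type*} [Fintype V] [DecidableEq V]

open Finset


/-- `W` dominates the set `A` in `G`: every vertex of `A` is in `W` or adjacent to a vertex of `W`. -/
def Dominates (G : SimpleGraph V) (W A : Finset V) : Prop :=
  ∀ a ∈ A, a ∈ W ∨ ∃ w ∈ W, G.Adj w a

/-- `I` is an independent set of `G`. -/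
def IndepSet (G : SimpleGraph V) (I : Finset V) : Prop :=
  ∀ u ∈ I, ∀ v ∈ I, ¬ G.Adj u v

instance (G : SimpleGraph V) [DecidableRel G.Adj] (I : Finset V) :
    Decidable (IndepSet G I) := by unfold IndepSet; infer_instance

/-- The domination number of `G`. -/
noncomputable def gamma (G : SimpleGraph V) : ℕ :=
  sInf {k | ∃ W : Finset V, W.card = k ∧ Dominates G W Finset.univ}

/-- The independence domination number of `G`. -/
noncomputable def igamma (G : SimpleGraph V) : ℕ :=
  sInf {k | ∀ I : Finset V, IndepSet G I → ∃ W : Finset V, W.card ≤ k ∧ Dominates G W I}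

/-- The noncover complex of `G`: faces are the vertex sets whose complement is not independent. -/
def NC (G : SimpleGraph V) [DecidableRel G.Adj] : Finset (Finset V) :=
  Finset.univ.filter fun W => ¬ IndepSet G Wᶜ

/-- The independence complex of `G`. -/
def IndComplex (G : SimpleGraph V) [DecidableRel G.Adj] : Finset (Finset V) :=
  Finset.univ.filter fun I => IndepSet G I

/-- The combinatorial Alexander dual of a complex on the full vertex set `V`. -/
def AlexDual (K : Finset (Finset V)) : Finset (Finset V) :=
  Finset.univ.filter fun s => sᶜ ∉ K

/-- `K` is a simplicial complex (downward closed family of finite sets). -/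
def IsComplex (K : Finset (Finset V)) : Prop :=
  ∀ σ ∈ K, ∀ τ ⊆ σ, τ ∈ K

/-- `s` is a maximal face (facet) of `K`. -/
def IsMaxFace (K : Finset (Finset V)) (s : Finset V) : Prop :=
  s ∈ K ∧ ∀ t ∈ K, s ⊆ t → t = s

/-- `σ` is a free face of `K`: a face contained in a unique maximal face. -/
def IsFreeFace (K : Finset (Finset V)) (σ : Finset V) : Prop :=
  σ ∈ K ∧ ∃ τ ∈ K, σ ⊆ τ ∧ ∀ ρ ∈ K, σ ⊆ ρ → ρ ⊆ τ

/-- `K'` is obtained from `K` by an elementary `d`-collapse. -/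
def ElemCollapse (d : ℕ) (K K' : Finset (Finset V)) : Prop :=
  ∃ σ : Finset V, IsFreeFace K σ ∧ σ.card ≤ d ∧ K' = K.filter fun ρ => ¬ σ ⊆ ρ

/-- `K` is `d`-collapsible. -/
def Collapsible (d : ℕ) (K : Finset (Finset V)) : Prop :=
  Relation.ReflTransGen (ElemCollapse d) K ∅

/-- chordality -/
def IsChordal (G : SimpleGraph V) : Prop :=
  ∀ (u : V) (c : G.Walk u u), c.IsCycle → 4 ≤ c.length →
    ∃ x ∈ c.support, ∃ y ∈ c.support, G.Adj x y ∧ s(x, y) ∉ c.edges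

/-- simplicial vertex -/
def IsSimplicialVtx (G : SimpleGraph V) (v : V) : Prop :=
  ∀ x y : V, G.Adj v x → G.Adj v y → x ≠ y → G.Adj x y

section Collapse

variable {α : Type*} [DecidableEq α]

theorem Collapsible.mono {d d' : ℕ} (h : d ≤ d') {K : Finset (Finset α)}
    (hK : Collapsible d K) : Collapsible d' K :=
  Relation.ReflTransGen.mono (fun _ _ ⟨σ, hσ, hcard, hK'⟩ => ⟨σ, hσ, hcard.trans h, hK'⟩) _ _ hK

theorem collapsible_of_forall_subset {K : Finset (Finset α)} {τ : Finset α} (hempty : ∅ ∈ K)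
    (hτ : τ ∈ K) (hmax : ∀ ρ ∈ K, ρ ⊆ τ) (d : ℕ) : Collapsible d K := by
  refine .single ⟨∅, ⟨hempty, τ, hτ, empty_subset _, fun ρ hρ _ => hmax ρ hρ⟩, Nat.zero_le _, ?_⟩
  ext ρ
  simp

def cone (a : α) (K : Finset (Finset α)) : Finset (Finset α) :=
  K ∪ K.image (insert a)

theorem cone_filter {a : α} {σ : Finset α} (haσ : a ∉ σ) (K : Finset (Finset α)) :
    cone a (K.filter fun ρ => ¬σ ⊆ ρ) = (cone a K).filter fun ρ => ¬σ ⊆ ρ := by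
  ext ρ
  simp only [cone, mem_union, mem_filter, mem_image]
  constructor
  · rintro (h | ⟨s, ⟨hs, hσs⟩, rfl⟩)
    · exact ⟨.inl h.1, h.2⟩
    · exact ⟨.inr ⟨s, hs, rfl⟩, by rwa [subset_insert_iff_of_notMem haσ]⟩
  · rintro ⟨h | ⟨s, hs, rfl⟩, hσρ⟩
    · exact .inl ⟨h, hσρ⟩
    · exact .inr ⟨s, ⟨hs, by rwa [subset_insert_iff_of_notMem haσ] at hσρ⟩, rfl⟩

theorem ElemCollapse.cone {d : ℕ} {a : α} {K K' : Finset (Finset α)} (ha : ∀ s ∈ K, a ∉ s)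
    (h : ElemCollapse d K K') : ElemCollapse d (cone a K) (cone a K') := by
  obtain ⟨σ, ⟨hσ, τ, hτ, hστ, hmax⟩, hcard, rfl⟩ := h
  refine ⟨σ, ⟨mem_union_left _ hσ, insert a τ, mem_union_right _ (mem_image_of_mem _ hτ),
    hστ.trans (subset_insert _ _), fun ρ hρ hσρ => ?_⟩, hcard, cone_filter (ha σ hσ) K⟩
  rcases mem_union.mp hρ with hρ | hρ
  · exact (hmax ρ hρ hσρ).trans (subset_insert _ _)
  · obtain ⟨s, hs, rfl⟩ := mem_image.mp hρ
    rw [subset_insert_iff_of_notMem (ha σ hσ)] at hσρ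
    exact insert_subset_insert _ (hmax s hs hσρ)

theorem Collapsible.cone {d : ℕ} {a : α} {K : Finset (Finset α)} (ha : ∀ s ∈ K, a ∉ s)
    (h : Collapsible d K) : Collapsible d (cone a K) := by
  induction h using Relation.ReflTransGen.head_induction_on with
  | refl => simpa [_root_.cone] using .refl
  | head hstep _ ih =>
    obtain ⟨σ, -, -, rfl⟩ := id hstep
    exact .head (hstep.cone ha) (ih fun s hs => ha s (mem_filter.mp hs).1)

def link (v : α) (K : Finset (Finset α)) : Finset (Finset α) :=
  (K.filter (v ∈ ·)).image (·.erase v)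

def deletion (v : α) (K : Finset (Finset α)) : Finset (Finset α) :=
  K.filter (v ∉ ·)

theorem mem_link {v : α} {K : Finset (Finset α)} {ρ : Finset α} :
    ρ ∈ link v K ↔ v ∉ ρ ∧ insert v ρ ∈ K := by
  simp only [link, mem_image, mem_filter]
  constructor
  · rintro ⟨s, ⟨hs, hvs⟩, rfl⟩
    exact ⟨notMem_erase _ _, by rwa [insert_erase hvs]⟩
  · rintro ⟨hv, hins⟩
    exact ⟨insert v ρ, ⟨hins, mem_insert_self _ _⟩, erase_insert hv⟩

theorem IsFreeFace.insert_of_link {v : α} {K : Finset (Finset α)} {σ : Finset α}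
    (h : IsFreeFace (link v K) σ) : IsFreeFace K (insert v σ) := by
  obtain ⟨hσ, τ, hτ, hστ, hmax⟩ := h
  refine ⟨(mem_link.mp hσ).2, insert v τ, (mem_link.mp hτ).2, insert_subset_insert _ hστ,
    fun ρ hρ hσρ => ?_⟩
  have hvρ : v ∈ ρ := hσρ (mem_insert_self _ _)
  have hρ' : ρ.erase v ∈ link v K := mem_link.mpr ⟨notMem_erase _ _, by rwa [insert_erase hvρ]⟩
  have hσρ' : σ ⊆ ρ.erase v :=
    (insert_subset_insert_iff (mem_link.mp hσ).1).mp (by rwa [insert_erase hvρ])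
  rw [← insert_erase hvρ]
  exact insert_subset_insert _ (hmax _ hρ' hσρ')

theorem link_filter_insert {v : α} {σ : Finset α} (hvσ : v ∉ σ) (K : Finset (Finset α)) :
    link v (K.filter fun ρ => ¬insert v σ ⊆ ρ) = (link v K).filter fun ρ => ¬σ ⊆ ρ := by
  ext ρ
  simp only [mem_link, mem_filter]
  constructor
  · rintro ⟨hvρ, hins, hn⟩
    exact ⟨⟨hvρ, hins⟩, fun h => hn (insert_subset_insert _ h)⟩
  · rintro ⟨⟨hvρ, hins⟩, hn⟩
    exact ⟨hvρ, hins, fun h => hn ((insert_subset_insert_iff hvσ).mp h)⟩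

theorem deletion_filter_insert (v : α) (σ : Finset α) (K : Finset (Finset α)) :
    deletion v (K.filter fun ρ => ¬insert v σ ⊆ ρ) = deletion v K := by
  ext ρ
  simp only [deletion, mem_filter]
  exact ⟨fun h => ⟨h.1.1, h.2⟩, fun h => ⟨⟨h.1, fun hσρ => h.2 (hσρ (mem_insert_self _ _))⟩, h.2⟩⟩

/-- Each collapse of the link by a face `σ` is mirrored by the collapse of `K` by `insert v σ`. -/
theorem collapses_to_deletion {v : α} {d : ℕ} {L : Finset (Finset α)} (hL : Collapsible d L) :
    ∀ K, link v K = L → Relation.ReflTransGen (ElemCollapse (d + 1)) K (deletion v K) := by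
  induction hL using Relation.ReflTransGen.head_induction_on with
  | refl =>
    intro K hK
    suffices deletion v K = K by rw [this]
    refine filter_true_of_mem fun s hs hvs => ?_
    have : s.erase v ∈ link v K := mem_link.mpr ⟨notMem_erase _ _, by rwa [insert_erase hvs]⟩
    simp [hK] at this
  | head hstep _ ih =>
    intro K hK
    obtain ⟨σ, hfree, hcard, rfl⟩ := hstep
    subst hK
    have hvσ : v ∉ σ := (mem_link.mp hfree.1).1
    have hcollapse : ElemCollapse (d + 1) K (K.filter fun ρ => ¬insert v σ ⊆ ρ) :=
      ⟨insert v σ, hfree.insert_of_link, by rw [card_insert_of_notMem hvσ]; omega, rfl⟩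
    have hrest := ih _ (link_filter_insert hvσ K)
    rw [deletion_filter_insert] at hrest
    exact .head hcollapse hrest

theorem Collapsible.of_link_of_deletion {v : α} {d : ℕ} {K : Finset (Finset α)}
    (hlink : Collapsible d (link v K)) (hdel : Collapsible (d + 1) (deletion v K)) :
    Collapsible (d + 1) K :=
  (collapses_to_deletion hlink K rfl).trans hdel

end Collapse

section NoncoverComplex

variable {α : Type*} [DecidableEq α] {A : Finset α} {E : Finset (Finset α)}

/-- Members of `E` of size `1` (and `∅`) are allowed: deleting a vertex turns edges into such
loops. -/
def noncoverComplex (A : Finset α) (E : Finset (Finset α)) : Finset (Finset α) :=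
  A.powerset.filter fun W => ∃ e ∈ E, Disjoint e W

theorem mem_noncoverComplex {W : Finset α} :
    W ∈ noncoverComplex A E ↔ W ⊆ A ∧ ∃ e ∈ E, Disjoint e W := by
  simp only [noncoverComplex, mem_filter, mem_powerset]

theorem noncoverComplex_empty (A : Finset α) : noncoverComplex A (∅ : Finset (Finset α)) = ∅ := by
  ext W
  simp [mem_noncoverComplex]

theorem collapsible_noncoverComplex_of_forall_subset {e₀ : Finset α} (he₀ : e₀ ∈ E)
    (hleast : ∀ e ∈ E, e₀ ⊆ e) (d : ℕ) : Collapsible d (noncoverComplex A E) := by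
  refine collapsible_of_forall_subset (τ := A \ e₀) ?_ ?_ (fun W hW => ?_) d
  · exact mem_noncoverComplex.mpr ⟨empty_subset _, e₀, he₀, disjoint_empty_right _⟩
  · exact mem_noncoverComplex.mpr ⟨sdiff_subset, e₀, he₀, disjoint_sdiff⟩
  · obtain ⟨hWA, e, he, hdisj⟩ := mem_noncoverComplex.mp hW
    exact subset_sdiff.mpr ⟨hWA, (hdisj.mono_left (hleast e he)).symm⟩

theorem link_noncoverComplex {v : α} (hv : v ∈ A) :
    link v (noncoverComplex A E) = noncoverComplex (A.erase v) (E.filter (v ∉ ·)) := by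
  ext ρ
  simp only [mem_link, mem_noncoverComplex, mem_filter, disjoint_insert_right, insert_subset_iff,
    subset_erase]
  constructor
  · rintro ⟨hvρ, ⟨-, hρA⟩, e, he, hve, hdisj⟩
    exact ⟨⟨hρA, hvρ⟩, e, ⟨he, hve⟩, hdisj⟩
  · rintro ⟨⟨hρA, hvρ⟩, e, ⟨he, hve⟩, hdisj⟩
    exact ⟨hvρ, ⟨hv, hρA⟩, e, he, hve, hdisj⟩

theorem deletion_noncoverComplex (v : α) :
    deletion v (noncoverComplex A E) = noncoverComplex (A.erase v) (E.image (·.erase v)) := by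
  ext W
  simp only [deletion, mem_filter, mem_noncoverComplex, subset_erase, mem_image,
    exists_exists_and_eq_and]
  constructor
  · rintro ⟨⟨hWA, e, he, hdisj⟩, hvW⟩
    exact ⟨⟨hWA, hvW⟩, e, he, hdisj.mono_left (erase_subset _ _)⟩
  · rintro ⟨⟨hWA, hvW⟩, e, he, hdisj⟩
    refine ⟨⟨hWA, e, he, ?_⟩, hvW⟩
    rwa [disjoint_erase_comm, erase_eq_of_notMem hvW] at hdisj

theorem noncoverComplex_eq_cone {a : α} (ha : a ∈ A) (hiso : ∀ e ∈ E, a ∉ e) :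
    noncoverComplex A E = cone a (noncoverComplex (A.erase a) E) := by
  ext W
  simp only [cone, mem_union, mem_image, mem_noncoverComplex, subset_erase]
  constructor
  · rintro ⟨hWA, e, he, hdisj⟩
    by_cases haW : a ∈ W
    · refine .inr ⟨W.erase a, ⟨⟨(erase_subset _ _).trans hWA, notMem_erase _ _⟩, e, he,
        hdisj.mono_right (erase_subset _ _)⟩, insert_erase haW⟩
    · exact .inl ⟨⟨hWA, haW⟩, e, he, hdisj⟩
  · rintro (⟨⟨hWA, -⟩, e, he, hdisj⟩ | ⟨s, ⟨⟨hsA, -⟩, e, he, hdisj⟩, rfl⟩)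
    · exact ⟨hWA, e, he, hdisj⟩
    · exact ⟨insert_subset ha hsA, e, he, disjoint_insert_right.mpr ⟨hiso e he, hdisj⟩⟩

def IsDominating (A : Finset α) (E : Finset (Finset α)) (W : Finset α) : Prop :=
  W ⊆ A ∧ ∀ a ∈ A, a ∈ W ∨ ∃ e ∈ E, a ∈ e ∧ e.erase a ⊆ W

noncomputable def domNumber (A : Finset α) (E : Finset (Finset α)) : ℕ :=
  sInf {k | ∃ W, IsDominating A E W ∧ W.card = k}

theorem exists_isDominating_card_eq (A : Finset α) (E : Finset (Finset α)) :
    ∃ W, IsDominating A E W ∧ W.card = domNumber A E :=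
  Nat.sInf_mem (s := {k | ∃ W, IsDominating A E W ∧ W.card = k})
    ⟨A.card, A, ⟨subset_rfl, fun _ ha => .inl ha⟩, rfl⟩

theorem IsDominating.domNumber_le {W : Finset α} (h : IsDominating A E W) :
    domNumber A E ≤ W.card :=
  Nat.sInf_le ⟨W, h, rfl⟩

theorem domNumber_le_deletion_add_one {v : α} (hv : v ∈ A) :
    domNumber A E ≤ domNumber (A.erase v) (E.image (·.erase v)) + 1 := by
  obtain ⟨W, ⟨hWA, hW⟩, hWcard⟩ := exists_isDominating_card_eq (A.erase v) (E.image (·.erase v))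
  have hdom : IsDominating A E (insert v W) := by
    refine ⟨insert_subset hv (hWA.trans (erase_subset _ _)), fun a ha => ?_⟩
    obtain rfl | hav := eq_or_ne a v
    · exact .inl (mem_insert_self _ _)
    obtain h | ⟨_, he', hae, hsub⟩ := hW a (mem_erase.mpr ⟨hav, ha⟩)
    · exact .inl (mem_insert_of_mem h)
    obtain ⟨e, he, rfl⟩ := mem_image.mp he'
    refine .inr ⟨e, he, mem_of_mem_erase hae, fun x hx => ?_⟩
    obtain rfl | hxv := eq_or_ne x v
    · exact mem_insert_self _ _
    · exact mem_insert_of_mem (hsub (by rw [erase_right_comm]; exact mem_erase_of_ne_of_mem hxv hx))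
  calc domNumber A E ≤ (insert v W).card := hdom.domNumber_le
    _ ≤ W.card + 1 := card_insert_le _ _
    _ = _ := by rw [hWcard]

theorem domNumber_le_link {v : α}
    (hv : ∀ W, IsDominating (A.erase v) (E.filter (v ∉ ·)) W →
      v ∈ W ∨ ∃ e ∈ E, v ∈ e ∧ e.erase v ⊆ W) :
    domNumber A E ≤ domNumber (A.erase v) (E.filter (v ∉ ·)) := by
  obtain ⟨W, hdom, hWcard⟩ := exists_isDominating_card_eq (A.erase v) (E.filter (v ∉ ·))
  rw [← hWcard]
  refine IsDominating.domNumber_le ⟨hdom.1.trans (erase_subset _ _), fun a ha => ?_⟩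
  obtain rfl | hav := eq_or_ne a v
  · exact hv W hdom
  obtain h | ⟨e, he, hae, hsub⟩ := hdom.2 a (mem_erase.mpr ⟨hav, ha⟩)
  · exact .inl h
  · exact .inr ⟨e, (mem_filter.mp he).1, hae, hsub⟩

theorem domNumber_add_two_le_card (hsub : ∀ e ∈ E, e ⊆ A) (hE : E.Nonempty)
    (hleast : ∀ e₀ ∈ E, ∃ e ∈ E, ¬e₀ ⊆ e) : domNumber A E + 2 ≤ A.card := by
  obtain ⟨e, he, hmin⟩ := exists_min_image E card hE
  obtain ⟨f, hf, hef⟩ := hleast e he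
  have hfe : ¬f ⊆ e := fun h => hef (eq_of_subset_of_card_le h (hmin f hf) ▸ subset_rfl)
  obtain ⟨a, hae, haf⟩ := not_subset.mp hef
  obtain ⟨b, hbf, hbe⟩ := not_subset.mp hfe
  have hab : a ≠ b := fun h => haf (h ▸ hbf)
  have haA := hsub e he hae
  have hbA := hsub f hf hbf
  have hdom : IsDominating A E ((A.erase a).erase b) := by
    refine ⟨(erase_subset _ _).trans (erase_subset _ _), fun c hc => ?_⟩
    obtain rfl | hca := eq_or_ne c a
    · exact .inr ⟨e, he, hae, fun x hx => by grind⟩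
    obtain rfl | hcb := eq_or_ne c b
    · exact .inr ⟨f, hf, hbf, fun x hx => by grind⟩
    · exact .inl (by grind)
  have hcard : ((A.erase a).erase b).card + 2 = A.card := by
    rw [card_erase_of_mem (mem_erase.mpr ⟨hab.symm, hbA⟩), card_erase_of_mem haA]
    have := card_le_card (insert_subset haA (singleton_subset_iff.mpr hbA))
    rw [card_pair hab] at this
    omega
  have := hdom.domNumber_le
  omega

theorem collapsible_noncoverComplex_of_erase {a : α} (ha : a ∈ A) (hiso : ∀ e ∈ E, a ∉ e)
    (h : Collapsible ((A.erase a).card - domNumber (A.erase a) E - 1)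
      (noncoverComplex (A.erase a) E)) :
    Collapsible (A.card - domNumber A E - 1) (noncoverComplex A E) := by
  have hγ := domNumber_le_deletion_add_one (E := E) ha
  rw [(image_congr fun e he => erase_eq_of_notMem (hiso e he)).trans image_id'] at hγ
  rw [noncoverComplex_eq_cone ha hiso]
  refine (h.mono ?_).cone fun s hs has => notMem_erase a A ((mem_noncoverComplex.mp hs).1 has)
  rw [card_erase_of_mem ha]
  omega

theorem collapsible_noncoverComplex_of_link_of_deletion {v : α} (hv : v ∈ A)
    (hγ : domNumber A E ≤ domNumber (A.erase v) (E.filter (v ∉ ·)))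
    (hbig : domNumber A E + 2 ≤ A.card)
    (hlink : Collapsible ((A.erase v).card - domNumber (A.erase v) (E.filter (v ∉ ·)) - 1)
      (noncoverComplex (A.erase v) (E.filter (v ∉ ·))))
    (hdel : Collapsible ((A.erase v).card - domNumber (A.erase v) (E.image (·.erase v)) - 1)
      (noncoverComplex (A.erase v) (E.image (·.erase v)))) :
    Collapsible (A.card - domNumber A E - 1) (noncoverComplex A E) := by
  have hγdel := domNumber_le_deletion_add_one (E := E) hv
  have hcard := card_erase_of_mem hv
  rw [show A.card - domNumber A E - 1 = A.card - domNumber A E - 2 + 1 by omega]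
  refine Collapsible.of_link_of_deletion (v := v) ?_ ?_
  · rw [link_noncoverComplex hv]
    exact hlink.mono (by omega)
  · rw [deletion_noncoverComplex]
    exact hdel.mono (by omega)

end NoncoverComplex

namespace SimpleGraph

variable {α : Type*} {G : SimpleGraph α}

def ReachableIn (G : SimpleGraph α) (T : Set α) (x y : α) : Prop :=
  ∃ p : G.Walk x y, ∀ z ∈ p.support, z ∈ T

namespace ReachableIn

variable {T T' : Set α} {x y z : α}

theorem refl (hx : x ∈ T) : G.ReachableIn T x x :=
  ⟨.nil, by simpa using hx⟩

theorem mem_right (h : G.ReachableIn T x y) : y ∈ T :=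
  h.elim fun p hp => hp _ p.end_mem_support

theorem symm (h : G.ReachableIn T x y) : G.ReachableIn T y x :=
  h.elim fun p hp => ⟨p.reverse, by simpa using hp⟩

theorem trans (h₁ : G.ReachableIn T x y) (h₂ : G.ReachableIn T y z) : G.ReachableIn T x z := by
  obtain ⟨p, hp⟩ := h₁
  obtain ⟨q, hq⟩ := h₂
  exact ⟨p.append q, fun w hw => (Walk.mem_support_append_iff p q).mp hw |>.elim (hp w) (hq w)⟩

theorem mono (hT : T ⊆ T') (h : G.ReachableIn T x y) : G.ReachableIn T' x y :=
  h.elim fun p hp => ⟨p, fun w hw => hT (hp w hw)⟩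

theorem within_reachableIn [DecidableEq α] (h : G.ReachableIn T x y) :
    G.ReachableIn {w | G.ReachableIn T x w} x y := by
  obtain ⟨p, hp⟩ := h
  exact ⟨p, fun w hw =>
    ⟨p.takeUntil w hw, fun u hu => hp u (p.support_takeUntil_subset_support hw hu)⟩⟩

end ReachableIn

theorem Adj.reachableIn {T : Set α} {x y : α} (h : G.Adj x y) (hx : x ∈ T) (hy : y ∈ T) :
    G.ReachableIn T x y :=
  ⟨h.toWalk, by simp [hx, hy]⟩

theorem ReachableIn.exists_adj_of_insert {B : Set α} {s x y : α}
    (h : G.ReachableIn (insert s B) x y) (hxy : ¬G.ReachableIn B x y) (hx : x ∈ B) :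
    ∃ u, G.Adj s u ∧ G.ReachableIn B x u := by
  obtain ⟨p, hp⟩ := h
  induction p with
  | nil => exact absurd (.refl hx) hxy
  | @cons x c y hxc q ih =>
    by_cases hcs : c = s
    · exact ⟨x, hcs ▸ hxc.symm, .refl hx⟩
    have hc : c ∈ B := (Set.mem_insert_iff.mp (hp c (by simp))).resolve_left hcs
    have hxc' : G.ReachableIn B x c := hxc.reachableIn hx hc
    obtain ⟨u, hsu, hcu⟩ := ih (fun hcy => hxy (hxc'.trans hcy)) hc
      (fun w hw => hp w (by simp [hw]))
    exact ⟨u, hsu, hxc'.trans hcu⟩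

namespace Walk

theorem two_le_length {x y : α} (p : G.Walk x y) (hxy : x ≠ y) (hnadj : ¬G.Adj x y) :
    2 ≤ p.length := by
  by_contra! h
  interval_cases hl : p.length
  · exact hxy (eq_of_length_eq_zero hl)
  · exact hnadj (adj_of_length_eq_one hl)

/-- Jumping along the edge `uw` shortens the walk. -/
theorem exists_shorter_of_adj [DecidableEq α] :
    ∀ {x y : α} (p : G.Walk x y) {u w : α}, u ∈ p.support → w ∈ p.support → G.Adj u w →
      s(u, w) ∉ p.edges → ∃ q : G.Walk x y, (∀ z ∈ q.support, z ∈ p.support) ∧ q.length < p.length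
  | _, _, .nil, u, w, hu, hw, hadj, _ => by
    simp only [support_nil, List.mem_singleton] at hu hw
    exact absurd (hu.trans hw.symm) hadj.ne
  | x, y, .cons (v := c) hxc q, u, w, hu, hw, hadj, hne => by
    have jump : ∀ w, w ∈ q.support → G.Adj x w → s(x, w) ∉ (cons hxc q).edges →
        ∃ r : G.Walk x y, (∀ z ∈ r.support, z ∈ (cons hxc q).support) ∧
          r.length < (cons hxc q).length := by
      intro w hw hxw hne
      have hcw : w ≠ c := by rintro rfl; simp at hne
      refine ⟨cons hxw (q.dropUntil w hw), fun z hz => ?_, ?_⟩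
      · simp only [support_cons, List.mem_cons] at hz ⊢
        exact hz.imp_right fun h => q.support_dropUntil_subset_support hw h
      · simpa using q.length_dropUntil_lt_length hw hcw
    rw [support_cons, List.mem_cons] at hu hw
    obtain rfl | hux := eq_or_ne u x
    · exact jump w (hw.resolve_left (hadj.ne.symm)) hadj hne
    obtain rfl | hwx := eq_or_ne w x
    · exact jump u (hu.resolve_left hux) hadj.symm (by rwa [Sym2.eq_swap])
    obtain ⟨r, hr, hlt⟩ := q.exists_shorter_of_adj (hu.resolve_left hux) (hw.resolve_left hwx) hadj
      (fun h => hne (by simp [h]))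
    refine ⟨cons hxc r, fun z hz => ?_, by simpa using hlt⟩
    simp only [support_cons, List.mem_cons] at hz ⊢
    exact hz.imp_right (hr z)

theorem isChordless_of_forall_length_le [DecidableEq α] {x y : α} {p : G.Walk x y}
    (h : ∀ q : G.Walk x y, (∀ z ∈ q.support, z ∈ p.support) → p.length ≤ q.length) :
    p.IsChordless := by
  refine isChordless_iff_forall_mem_edges.mpr fun u w hu hw hadj => ?_
  by_contra hne
  obtain ⟨q, hq, hlt⟩ := p.exists_shorter_of_adj hu hw hadj hne
  exact (h q hq).not_gt hlt

end Walk

theorem ReachableIn.exists_isPath_isChordless [DecidableEq α] {T : Set α} {x y : α}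
    (h : G.ReachableIn T x y) :
    ∃ p : G.Walk x y, p.IsPath ∧ p.IsChordless ∧ ∀ z ∈ p.support, z ∈ T := by
  classical
  have hex : ∃ n, ∃ p : G.Walk x y, (∀ z ∈ p.support, z ∈ T) ∧ p.length = n :=
    h.elim fun p hp => ⟨_, p, hp, rfl⟩
  obtain ⟨p, hp, hlen⟩ := Nat.find_spec hex
  have hmin : ∀ q : G.Walk x y, (∀ z ∈ q.support, z ∈ T) → p.bypass.length ≤ q.length :=
    fun q hq => (p.length_bypass_le_length).trans (hlen ▸ Nat.find_min' hex ⟨q, hq, rfl⟩)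
  have hbT : ∀ z ∈ p.bypass.support, z ∈ T := fun z hz => hp z (p.support_bypass_subset_support hz)
  exact ⟨p.bypass, p.bypass_isPath,
    Walk.isChordless_of_forall_length_le fun q hq => hmin q fun z hz => hbT z (hq z hz), hbT⟩

end SimpleGraph

section Chordal

open SimpleGraph

variable {α : Type*} {G : SimpleGraph α}

/-- Were `x ≁ y`, the paths `p` and `q` would close a chordless cycle of length at least `4`. -/
theorem IsChordal.adj_of_chordless_paths (hG : IsChordal G) {x y : α} (hxy : x ≠ y)
    {p : G.Walk x y} {q : G.Walk y x} (hp : p.IsPath) (hq : q.IsPath) (hpc : p.IsChordless)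
    (hqc : q.IsChordless) (hmeet : ∀ z ∈ p.support, z ∈ q.support → z = x ∨ z = y)
    (hcross : ∀ u ∈ p.support, ∀ w ∈ q.support, G.Adj u w → u = x ∨ u = y ∨ w = x ∨ w = y) :
    G.Adj x y := by
  by_contra hnadj
  have hp2 := p.two_le_length hxy hnadj
  have hq2 := q.two_le_length hxy.symm fun h => hnadj h.symm
  have htail : p.support.tail.Disjoint q.support.tail := by
    intro z hzp hzq
    have hp' := hp.support_nodup
    have hq' := hq.support_nodup
    rw [← p.cons_tail_support] at hp'
    rw [← q.cons_tail_support] at hq'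
    rcases hmeet z (List.mem_of_mem_tail hzp) (List.mem_of_mem_tail hzq) with rfl | rfl
    · exact (List.nodup_cons.mp hp').1 hzp
    · exact (List.nodup_cons.mp hq').1 hzq
  obtain ⟨u, hu, w, hw, huw, hne⟩ :=
    hG x _ (hp.isCycle_append hq htail (.inl hp2)) (by simp; omega)
  rw [Walk.edges_append, List.mem_append, not_or] at hne
  rw [Walk.mem_support_append_iff] at hu hw
  have hcross' : ∀ u ∈ p.support, ∀ w ∈ q.support, G.Adj u w →
      u ∈ q.support ∨ w ∈ p.support := fun u hu w hw huw => by
    rcases hcross u hu w hw huw with rfl | rfl | rfl | rfl <;> simp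
  have hsame : (u ∈ p.support ∧ w ∈ p.support) ∨ (u ∈ q.support ∧ w ∈ q.support) := by
    rcases hu with hu | hu <;> rcases hw with hw | hw
    · exact .inl ⟨hu, hw⟩
    · exact (hcross' u hu w hw huw).elim (fun h => .inr ⟨h, hw⟩) fun h => .inl ⟨hu, h⟩
    · exact (hcross' w hw u hu huw.symm).elim (fun h => .inr ⟨hu, h⟩) fun h => .inl ⟨h, hw⟩
    · exact .inr ⟨hu, hw⟩
  rcases hsame with ⟨hu, hw⟩ | ⟨hu, hw⟩
  · exact hne.1 (hpc.mem_edges hu hw huw)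
  · exact hne.2 (hqc.mem_edges hu hw huw)

/-- Shortest paths from `x` to `y` through the part of `B` reachable from `a`, and back through
the part reachable from `b`, satisfy the hypotheses of `IsChordal.adj_of_chordless_paths`. -/
theorem IsChordal.adj_of_separated [DecidableEq α] (hG : IsChordal G) {B : Set α} {a b x y : α}
    (hab : ¬G.ReachableIn B a b) (hxy : x ≠ y)
    (hxa : ∃ u, G.Adj x u ∧ G.ReachableIn B a u) (hya : ∃ u, G.Adj y u ∧ G.ReachableIn B a u)
    (hxb : ∃ u, G.Adj x u ∧ G.ReachableIn B b u) (hyb : ∃ u, G.Adj y u ∧ G.ReachableIn B b u) :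
    G.Adj x y := by
  have side : ∀ c, (∃ u, G.Adj x u ∧ G.ReachableIn B c u) →
      (∃ u, G.Adj y u ∧ G.ReachableIn B c u) →
      G.ReachableIn {z | z = x ∨ z = y ∨ G.ReachableIn B c z} x y := by
    rintro c ⟨u, hxu, hcu⟩ ⟨v, hyv, hcv⟩
    have huv : G.ReachableIn {z | z = x ∨ z = y ∨ G.ReachableIn B c z} u v :=
      (hcu.symm.trans hcv).within_reachableIn.mono fun z hz => .inr (.inr (hcu.trans hz))
    exact (hxu.reachableIn (.inl rfl) (.inr (.inr hcu))).trans
      (huv.trans (hyv.symm.reachableIn (.inr (.inr hcv)) (.inr (.inl rfl))))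
  obtain ⟨p, hp, hpc, hpT⟩ := (side a hxa hya).exists_isPath_isChordless
  obtain ⟨q, hq, hqc, hqT⟩ := (side b hxb hyb).symm.exists_isPath_isChordless
  refine hG.adj_of_chordless_paths hxy hp hq hpc hqc (fun z hzp hzq => ?_) (fun u hu w hw huw => ?_)
  · obtain h | h | haz := hpT z hzp
    · exact .inl h
    · exact .inr h
    obtain h | h | hbz := hqT z hzq
    · exact .inl h
    · exact .inr h
    · exact absurd (haz.trans hbz.symm) hab
  · obtain h | h | hau := hpT u hu
    · exact .inl h
    · exact .inr (.inl h)
    obtain h | h | hbw := hqT w hw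
    · exact .inr (.inr (.inl h))
    · exact .inr (.inr (.inr h))
    · exact absurd ((hau.trans (huw.reachableIn hau.mem_right hbw.mem_right)).trans hbw.symm) hab

end Chordal

section Dirac

open SimpleGraph

variable {α : Type*} {G : SimpleGraph α}

def IsSimplicialIn (G : SimpleGraph α) (A : Finset α) (z : α) : Prop :=
  G.IsClique {x | x ∈ A ∧ G.Adj z x}

theorem IsSimplicialIn.of_subset {A A' : Finset α} {z : α} (h : IsSimplicialIn G A' z)
    (hnbr : ∀ x ∈ A, G.Adj z x → x ∈ A') : IsSimplicialIn G A z :=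
  fun _ hx _ hy => h ⟨hnbr _ hx.1 hx.2, hx.2⟩ ⟨hnbr _ hy.1 hy.2, hy.2⟩

theorem exists_minimal_separator [DecidableEq α] (A : Finset α) {a b : α} (hab : a ≠ b)
    (hnadj : ¬G.Adj a b) :
    ∃ S ⊆ A, a ∉ S ∧ b ∉ S ∧ ¬G.ReachableIn ↑(A \ S) a b ∧
      ∀ s ∈ S, G.ReachableIn ↑(A \ S.erase s) a b := by
  classical
  set seps := A.powerset.filter fun S => a ∉ S ∧ b ∉ S ∧ ¬G.ReachableIn ↑(A \ S) a b
  have hS₀ : (A.erase a).erase b ∈ seps := by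
    refine mem_filter.mpr ⟨mem_powerset.mpr ((erase_subset _ _).trans (erase_subset _ _)),
      by simp, by simp, fun h => ?_⟩
    have hab' : ¬G.ReachableIn {a} a b := fun h => hab (h.mem_right).symm
    obtain ⟨u, hbu, hau⟩ := (h.mono (T' := insert b {a}) fun z hz => by
      simp only [coe_sdiff, coe_erase, Set.mem_sdiff, Set.mem_singleton_iff] at hz
      grind).exists_adj_of_insert hab' rfl
    exact hnadj ((hau.mem_right : u = a) ▸ hbu).symm
  obtain ⟨S, hS, hmin⟩ := exists_min_image seps card ⟨_, hS₀⟩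
  obtain ⟨hSA, haS, hbS, hsep⟩ := mem_filter.mp hS
  refine ⟨S, mem_powerset.mp hSA, haS, hbS, hsep, fun s hs => ?_⟩
  by_contra h
  have := hmin (S.erase s) (mem_filter.mpr ⟨mem_powerset.mpr ((erase_subset _ _).trans
    (mem_powerset.mp hSA)), fun h' => haS (mem_of_mem_erase h'),
    fun h' => hbS (mem_of_mem_erase h'), h⟩)
  rw [card_erase_of_mem hs] at this
  have := card_pos.mpr ⟨s, hs⟩
  omega

theorem IsChordal.isClique_of_minimal_separator [DecidableEq α] (hG : IsChordal G)
    {A S : Finset α} {a b : α} (ha : a ∈ A \ S) (hb : b ∈ A \ S)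
    (hsep : ¬G.ReachableIn ↑(A \ S) a b) (hmin : ∀ s ∈ S, G.ReachableIn ↑(A \ S.erase s) a b) :
    G.IsClique (S : Set α) := by
  have hnbr : ∀ s ∈ S, ∀ c d, c ∈ A \ S → ¬G.ReachableIn ↑(A \ S) c d →
      G.ReachableIn ↑(A \ S.erase s) c d → ∃ u, G.Adj s u ∧ G.ReachableIn ↑(A \ S) c u :=
    fun s _ c d hc hcd h => (h.mono fun z hz => by
      simp only [coe_sdiff, coe_erase, Set.mem_sdiff, Set.mem_insert_iff] at hz ⊢
      grind).exists_adj_of_insert hcd hc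
  intro x hx y hy hxy
  have hsep' : ¬G.ReachableIn ↑(A \ S) b a := fun h => hsep h.symm
  exact hG.adj_of_separated hsep hxy (hnbr x hx a b ha hsep (hmin x hx))
    (hnbr y hy a b ha hsep (hmin y hy)) (hnbr x hx b a hb hsep' (hmin x hx).symm)
    (hnbr y hy b a hb hsep' (hmin y hy).symm)

/-- The part of `A \ S` reachable from `a`, together with the clique `S`, is a smaller set
to which Dirac's lemma applies; a simplicial vertex found there off `S` is simplicial in `A`. -/
theorem exists_isSimplicialIn_of_separator [DecidableEq α] {A S : Finset α} {a b : α}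
    (hSA : S ⊆ A) (hS : G.IsClique (S : Set α)) (ha : a ∈ A \ S) (hb : b ∈ A \ S)
    (hsep : ¬G.ReachableIn ↑(A \ S) a b)
    (ih : ∀ A' ⊂ A, G.IsClique (A' : Set α) ∨ ∃ z₁ ∈ A', ∃ z₂ ∈ A', z₁ ≠ z₂ ∧ ¬G.Adj z₁ z₂ ∧
      IsSimplicialIn G A' z₁ ∧ IsSimplicialIn G A' z₂) :
    ∃ z, G.ReachableIn ↑(A \ S) a z ∧ IsSimplicialIn G A z := by
  classical
  set C := (A \ S).filter (G.ReachableIn ↑(A \ S) a ·)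
  have hCS : C ∪ S ⊂ A := by
    refine ssubset_of_subset_of_ne (union_subset ((filter_subset _ _).trans sdiff_subset) hSA)
      fun h => ?_
    have hbCS : b ∈ C ∪ S := h ▸ (mem_sdiff.mp hb).1
    obtain hbC | hbS := mem_union.mp hbCS
    · exact hsep (mem_filter.mp hbC).2
    · exact (mem_sdiff.mp hb).2 hbS
  have hlift : ∀ z ∈ C ∪ S, z ∉ S → IsSimplicialIn G (C ∪ S) z →
      ∃ z, G.ReachableIn ↑(A \ S) a z ∧ IsSimplicialIn G A z := by
    intro z hzCS hzS hz
    have hzC : z ∈ C := (mem_union.mp hzCS).resolve_right hzS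
    refine ⟨z, (mem_filter.mp hzC).2, hz.of_subset fun x hx hzx => ?_⟩
    by_cases hxS : x ∈ S
    · exact mem_union_right _ hxS
    · have hxAS : x ∈ A \ S := mem_sdiff.mpr ⟨hx, hxS⟩
      exact mem_union_left _ (mem_filter.mpr ⟨hxAS, (mem_filter.mp hzC).2.trans
        (hzx.reachableIn (mem_filter.mp hzC).1 hxAS)⟩)
  obtain hcl | ⟨z₁, hz₁, z₂, hz₂, hne, hnadj, hs₁, hs₂⟩ := ih _ hCS
  · exact hlift a (mem_union_left _ (mem_filter.mpr ⟨ha, .refl ha⟩)) (mem_sdiff.mp ha).2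
      (hcl.subset fun x hx => hx.1)
  · by_cases hz₁S : z₁ ∈ S
    · exact hlift z₂ hz₂ (fun hz₂S => hnadj (hS hz₁S hz₂S hne)) hs₂
    · exact hlift z₁ hz₁ hz₁S hs₁

theorem IsChordal.isClique_or_exists_isSimplicialIn [DecidableEq α] (hG : IsChordal G)
    (A : Finset α) :
    G.IsClique (A : Set α) ∨ ∃ z₁ ∈ A, ∃ z₂ ∈ A, z₁ ≠ z₂ ∧ ¬G.Adj z₁ z₂ ∧
      IsSimplicialIn G A z₁ ∧ IsSimplicialIn G A z₂ := by
  induction A using Finset.strongInduction with | H A ih => ?_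
  by_cases hA : G.IsClique (A : Set α)
  · exact .inl hA
  obtain ⟨a, ha, b, hb, hab, hnadj⟩ : ∃ a ∈ A, ∃ b ∈ A, a ≠ b ∧ ¬G.Adj a b := by
    simpa [IsClique, Set.Pairwise] using hA
  obtain ⟨S, hSA, haS, hbS, hsep, hmin⟩ := exists_minimal_separator A hab hnadj
  have ha' : a ∈ A \ S := mem_sdiff.mpr ⟨ha, haS⟩
  have hb' : b ∈ A \ S := mem_sdiff.mpr ⟨hb, hbS⟩
  have hS := hG.isClique_of_minimal_separator ha' hb' hsep hmin
  obtain ⟨za, hza, hsa⟩ := exists_isSimplicialIn_of_separator hSA hS ha' hb' hsep ih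
  obtain ⟨zb, hzb, hsb⟩ :=
    exists_isSimplicialIn_of_separator hSA hS hb' ha' (fun h => hsep h.symm) ih
  have hsep' : ∀ z, G.ReachableIn ↑(A \ S) a z → ¬G.ReachableIn ↑(A \ S) b z :=
    fun z haz hbz => hsep (haz.trans hbz.symm)
  refine .inr ⟨za, (mem_sdiff.mp hza.mem_right).1, zb, (mem_sdiff.mp hzb.mem_right).1,
    fun h => hsep' za hza (h ▸ hzb), fun h => hsep' zb (hza.trans ?_) hzb, hsa, hsb⟩
  exact h.reachableIn hza.mem_right hzb.mem_right

theorem IsChordal.exists_isSimplicialIn [DecidableEq α] (hG : IsChordal G) {A : Finset α}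
    (hA : A.Nonempty) : ∃ z ∈ A, IsSimplicialIn G A z := by
  obtain hcl | ⟨z, hz, -, -, -, -, hs, -⟩ := hG.isClique_or_exists_isSimplicialIn A
  · obtain ⟨z, hz⟩ := hA
    exact ⟨z, hz, hcl.subset fun x hx => hx.1⟩
  · exact ⟨z, hz, hs⟩

end Dirac

section EdgeFamily

open SimpleGraph

variable {α : Type*} [DecidableEq α] {G : SimpleGraph α} {A : Finset α} {E : Finset (Finset α)}

structure IsEdgeFamily (G : SimpleGraph α) (A : Finset α) (E : Finset (Finset α)) : Prop where
  subset : ∀ e ∈ E, e ⊆ A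
  card_le_two : ∀ e ∈ E, e.card ≤ 2
  adj : ∀ e ∈ E, ∀ x ∈ e, ∀ y ∈ e, x ≠ y → G.Adj x y
  pair_mem : ∀ x ∈ A, ∀ y ∈ A, G.Adj x y → {x, y} ∈ E

namespace IsEdgeFamily

theorem erase_of_forall_notMem (h : IsEdgeFamily G A E) {a : α} (ha : ∀ e ∈ E, a ∉ e) :
    IsEdgeFamily G (A.erase a) E where
  subset e he := subset_erase.mpr ⟨h.subset e he, ha e he⟩
  card_le_two := h.card_le_two
  adj := h.adj
  pair_mem x hx y hy := h.pair_mem x (mem_of_mem_erase hx) y (mem_of_mem_erase hy)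

theorem link (h : IsEdgeFamily G A E) (v : α) : IsEdgeFamily G (A.erase v) (E.filter (v ∉ ·)) where
  subset e he := subset_erase.mpr ⟨h.subset e (mem_filter.mp he).1, (mem_filter.mp he).2⟩
  card_le_two e he := h.card_le_two e (mem_filter.mp he).1
  adj e he := h.adj e (mem_filter.mp he).1
  pair_mem x hx y hy hxy := mem_filter.mpr ⟨h.pair_mem x (mem_of_mem_erase hx) y
    (mem_of_mem_erase hy) hxy, by simp [(ne_of_mem_erase hx).symm, (ne_of_mem_erase hy).symm]⟩

theorem deletion (h : IsEdgeFamily G A E) (v : α) :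
    IsEdgeFamily G (A.erase v) (E.image (·.erase v)) where
  subset e he := by
    obtain ⟨e, he', rfl⟩ := mem_image.mp he
    exact erase_subset_erase v (h.subset e he')
  card_le_two e he := by
    obtain ⟨e, he', rfl⟩ := mem_image.mp he
    exact card_erase_le.trans (h.card_le_two e he')
  adj e he := by
    obtain ⟨e, he', rfl⟩ := mem_image.mp he
    exact fun x hx y hy => h.adj e he' x (mem_of_mem_erase hx) y (mem_of_mem_erase hy)
  pair_mem x hx y hy hxy := mem_image.mpr ⟨{x, y}, h.pair_mem x (mem_of_mem_erase hx) y
    (mem_of_mem_erase hy) hxy, erase_eq_of_notMem (by simp [(ne_of_mem_erase hx).symm,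
      (ne_of_mem_erase hy).symm])⟩

end IsEdgeFamily

/-- A dominating set of the link of `v` dominates `z` through `z` itself or a neighbour `w` of
`z`, and either one is adjacent to `v` because `z` is simplicial. -/
theorem domNumber_le_link_of_isSimplicialIn (hE : IsEdgeFamily G A E)
    (htwo : ∀ e ∈ E, 2 ≤ e.card) {z v : α} (hz : z ∈ A) (hv : v ∈ A) (hzv : G.Adj z v)
    (hsimp : IsSimplicialIn G A z) :
    domNumber A E ≤ domNumber (A.erase v) (E.filter (v ∉ ·)) := by
  refine domNumber_le_link fun W ⟨hWA, hW⟩ => ?_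
  have dominated_by : ∀ w ∈ W, G.Adj v w → ∃ e ∈ E, v ∈ e ∧ e.erase v ⊆ W := fun w hw hvw =>
    ⟨{v, w}, hE.pair_mem v hv w (mem_of_mem_erase (hWA hw)) hvw, mem_insert_self _ _, by
      rw [erase_insert (by simpa using hvw.ne)]
      exact singleton_subset_iff.mpr hw⟩
  obtain hzW | ⟨e, he, hze, hsub⟩ := hW z (mem_erase.mpr ⟨hzv.ne, hz⟩)
  · exact .inr (dominated_by z hzW hzv.symm)
  obtain ⟨he, hve⟩ := mem_filter.mp he
  obtain ⟨w, hw⟩ : ∃ w, e.erase z = {w} := card_eq_one.mp (by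
    have := hE.card_le_two e he
    have := htwo e he
    rw [card_erase_of_mem hze]
    omega)
  have hwe : w ∈ e := mem_of_mem_erase (hw ▸ mem_singleton_self w)
  have hzw : G.Adj z w := hE.adj e he z hze w hwe (ne_of_mem_erase (hw ▸ mem_singleton_self w)).symm
  have hvw : G.Adj v w := hsimp ⟨hv, hzv⟩ ⟨hE.subset e he hwe, hzw⟩ (fun h => hve (h ▸ hwe))
  exact .inr (dominated_by w (hsub (hw ▸ mem_singleton_self w)) hvw)

theorem exists_domNumber_le_link (hG : IsChordal G) (hE : IsEdgeFamily G A E) (hempty : ∅ ∉ E)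
    (hcov : ∀ a ∈ A, ∃ e ∈ E, a ∈ e) (hA : A.Nonempty) :
    ∃ v ∈ A, domNumber A E ≤ domNumber (A.erase v) (E.filter (v ∉ ·)) := by
  by_cases hsingle : ∃ e ∈ E, e.card ≤ 1
  · obtain ⟨e, he, hcard⟩ := hsingle
    obtain ⟨v, rfl⟩ : ∃ v, e = {v} := card_eq_one.mp (by
      have := card_pos.mpr (nonempty_iff_ne_empty.mpr fun h => hempty (h ▸ he))
      omega)
    exact ⟨v, hE.subset _ he (mem_singleton_self v),
      domNumber_le_link fun _ _ => .inr ⟨{v}, he, mem_singleton_self v, by simp⟩⟩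
  push Not at hsingle
  obtain ⟨z, hz, hsimp⟩ := hG.exists_isSimplicialIn hA
  obtain ⟨e, he, hze⟩ := hcov z hz
  obtain ⟨v, hv⟩ : ∃ v, e.erase z = {v} := card_eq_one.mp (by
    have := hE.card_le_two e he
    have := hsingle e he
    rw [card_erase_of_mem hze]
    omega)
  have hve : v ∈ e.erase z := hv ▸ mem_singleton_self v
  exact ⟨v, hE.subset e he (mem_of_mem_erase hve), domNumber_le_link_of_isSimplicialIn hE
    (fun e he => hsingle e he) hz (hE.subset e he (mem_of_mem_erase hve))
    (hE.adj e he z hze v (mem_of_mem_erase hve) (ne_of_mem_erase hve).symm) hsimp⟩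

theorem IsChordal.collapsible_noncoverComplex (hG : IsChordal G) (hE : IsEdgeFamily G A E) :
    Collapsible (A.card - domNumber A E - 1) (noncoverComplex A E) := by
  induction A using Finset.strongInduction generalizing E with | H A ih => ?_
  rcases E.eq_empty_or_nonempty with rfl | hEne
  · rw [noncoverComplex_empty]
    exact .refl
  by_cases hleast : ∃ e₀ ∈ E, ∀ e ∈ E, e₀ ⊆ e
  · obtain ⟨e₀, he₀, hle⟩ := hleast
    exact collapsible_noncoverComplex_of_forall_subset he₀ hle _
  push Not at hleast
  by_cases hiso : ∃ a ∈ A, ∀ e ∈ E, a ∉ e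
  · obtain ⟨a, ha, hae⟩ := hiso
    exact collapsible_noncoverComplex_of_erase ha hae
      (ih _ (erase_ssubset ha) (hE.erase_of_forall_notMem hae))
  push Not at hiso
  have hbig := domNumber_add_two_le_card hE.subset hEne hleast
  have hempty : ∅ ∉ E := fun h => (hleast ∅ h).elim fun e ⟨_, hne⟩ => hne (empty_subset e)
  obtain ⟨v, hv, hγ⟩ := exists_domNumber_le_link hG hE hempty hiso (card_pos.mp (by omega))
  exact collapsible_noncoverComplex_of_link_of_deletion hv hγ hbig
    (ih _ (erase_ssubset hv) (hE.link v)) (ih _ (erase_ssubset hv) (hE.deletion v))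

end EdgeFamily

def edgeFamily (G : SimpleGraph V) [DecidableRel G.Adj] : Finset (Finset V) :=
  G.edgeFinset.image Sym2.toFinset

theorem mem_edgeFamily {G : SimpleGraph V} [DecidableRel G.Adj] {e : Finset V} :
    e ∈ edgeFamily G ↔ ∃ x y, G.Adj x y ∧ {x, y} = e := by
  simp only [edgeFamily, mem_image, Sym2.exists, SimpleGraph.mem_edgeFinset,
    SimpleGraph.mem_edgeSet, Sym2.toFinset_mk_eq]

theorem isEdgeFamily_edgeFamily (G : SimpleGraph V) [DecidableRel G.Adj] :
    IsEdgeFamily G univ (edgeFamily G) where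
  subset _ _ := subset_univ _
  card_le_two e he := by
    obtain ⟨x, y, -, rfl⟩ := mem_edgeFamily.mp he
    exact card_le_two
  adj e he := by
    obtain ⟨x, y, hxy, rfl⟩ := mem_edgeFamily.mp he
    simp only [mem_insert, mem_singleton]
    rintro a (rfl | rfl) b (rfl | rfl) hab <;>
      first | exact absurd rfl hab | exact hxy | exact hxy.symm
  pair_mem x _ y _ hxy := mem_edgeFamily.mpr ⟨x, y, hxy, rfl⟩

theorem NC_eq_noncoverComplex (G : SimpleGraph V) [DecidableRel G.Adj] :
    NC G = noncoverComplex univ (edgeFamily G) := by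
  ext W
  simp only [NC, IndepSet, mem_filter, mem_univ, true_and, mem_noncoverComplex, subset_univ,
    mem_edgeFamily, mem_compl, not_forall, not_not]
  constructor
  · rintro ⟨x, hx, y, hy, hxy⟩
    exact ⟨_, ⟨x, y, hxy, rfl⟩, by simp [disjoint_insert_left, hx, hy]⟩
  · rintro ⟨_, ⟨x, y, hxy, rfl⟩, hdisj⟩
    simp only [disjoint_insert_left, disjoint_singleton_left] at hdisj
    exact ⟨x, hdisj.1, y, hdisj.2, hxy⟩

theorem dominates_univ_iff (G : SimpleGraph V) [DecidableRel G.Adj] (W : Finset V) :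
    Dominates G W univ ↔ IsDominating univ (edgeFamily G) W := by
  simp only [Dominates, IsDominating, subset_univ, mem_univ, true_and, forall_const]
  refine forall_congr' fun a => or_congr_right ⟨?_, ?_⟩
  · rintro ⟨w, hw, hwa⟩
    refine ⟨{a, w}, mem_edgeFamily.mpr ⟨a, w, hwa.symm, rfl⟩, mem_insert_self _ _, ?_⟩
    rw [erase_insert (by simpa using hwa.ne')]
    exact singleton_subset_iff.mpr hw
  · rintro ⟨e, he, hae, hsub⟩
    obtain ⟨x, y, hxy, rfl⟩ := mem_edgeFamily.mp he
    rcases mem_insert.mp hae with rfl | hay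
    · exact ⟨y, hsub (by simp [hxy.ne']), hxy.symm⟩
    · obtain rfl := mem_singleton.mp hay
      exact ⟨x, hsub (by simp [hxy.ne]), hxy⟩

theorem gamma_eq_domNumber (G : SimpleGraph V) [DecidableRel G.Adj] :
    gamma G = domNumber univ (edgeFamily G) := by
  simp only [gamma, domNumber, dominates_univ_iff, and_comm]

theorem noncover_collapsible_gamma_general (G : SimpleGraph V) [DecidableRel G.Adj]
    (hG : IsChordal G) :
    Collapsible (Fintype.card V - gamma G - 1) (NC G) := by
  rw [NC_eq_noncoverComplex, gamma_eq_domNumber, ← card_univ]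
  exact hG.collapsible_noncoverComplex (isEdgeFamily_edgeFamily G)

/-- For a chordal graph `G` on `n` vertices with no isolated vertices,
`NC(G)` is `(n - γ(G) - 1)`-collapsible. -/
theorem noncover_collapsible_gamma (G : SimpleGraph V) [DecidableRel G.Adj]
    (hG : IsChordal G) (hiso : ∀ v : V, ∃ u, G.Adj v u) :
    Collapsible (Fintype.card V - gamma G - 1) (NC G) :=
  noncover_collapsible_gamma_general G hG
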